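/- arXiv:2002.10238 — 2 statements merged into one kernel-verified Lean document; each statement's English description precedes it below -/
import Mathlib

section
/- Let $(A,\cdot_A)$ be a commutative associative algebra and let $\cdot_\hbar$, determined by bilinear maps $\mu_n:A\times A\to A$ with $\mu_0 = \cdot_A$ via $x\cdot_\hbar y = \sum_{n\ge 0}\hbar^n\mu_n(x,y)$, be a pre-Lie product on $A[[\hbar]]$. Then $(A,\cdot_A,[-,-]_A)$ with $[x,y]_A = \mu_1(x,y) - \mu_1(y,x)$ is an F-manifold algebra. -/
/-!
Write `·` for `μ 0` and `∗` for `μ 1` and compare coefficients of `ℏ ^ k` in the pre-Lie identity.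
At order `0`: a commutative pre-Lie product is associative. The Jacobiator of the commutator of a
pre-Lie product is an alternating sum of associators, so it vanishes coefficientwise; since `·` is
commutative, its `ℏ ^ 2` coefficient is the Jacobiator of `[x, y] = x ∗ y - y ∗ x`.
At order `1`: the Leibniz defect `P(x, y, z) = x ∗ (y · z) - (x ∗ y) · z - y · (x ∗ z)` of `∗` is
symmetric in `x, y`, hence totally symmetric. The Hertling-Manin defect of `[-, -]` is
`H(x, y, z, w) - H(z, w, x, y)`, with `H` the Hertling-Manin defect of `∗`, and by the symmetry of
`P` the value `H(x, y, z, w)` is the second-order Leibniz defect of `z ∗ -` at `x, y, w`, which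
turns out to be symmetric in all four arguments.
-/

namespace FMan
variable {A : Type*} [AddCommGroup A]

/-- The Hertling-Manin operator `P_x(y,z) = [x, y·z] - [x,y]·z - y·[x,z]`. -/
def P (mul br : A → A → A) (x y z : A) : A :=
  br x (mul y z) - mul (br x y) z - mul y (br x z)

/-- `(A, mul, br)` is an F-manifold algebra: `mul` is commutative associative,
`br` is a Lie bracket, and the Hertling-Manin relation holds. -/
def IsFManifold (mul br : A → A → A) : Prop :=
  (∀ x y, mul x y = mul y x) ∧
  (∀ x y z, mul (mul x y) z = mul x (mul y z)) ∧
  (∀ x y, br x y = - br y x) ∧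
  (∀ x y z, br x (br y z) + br y (br z x) + br z (br x y) = 0) ∧
  (∀ x y z w, P mul br (mul x y) z w =
      mul x (P mul br y z w) + mul y (P mul br x z w))

/-- `F₁(x,y,z) = x∗(y⋄z) - y⋄(x∗z) - [x,y]⋄z`. -/
def F1 (d s : A → A → A) (x y z : A) : A :=
  s x (d y z) - d y (s x z) - d (s x y - s y x) z

/-- `F₂(x,y,z) = x⋄(y∗z) + y⋄(x∗z) - (x·y)∗z`. -/
def F2 (d s : A → A → A) (x y z : A) : A :=
  d x (s y z) + d y (s x z) - s (d x y + d y x) z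

/-- `(A, ⋄, ∗)` is a pre-F-manifold algebra: `⋄` Zinbiel, `∗` pre-Lie, plus
the two compatibility conditions. -/
def IsPreFManifold (d s : A → A → A) : Prop :=
  (∀ x y z, d x (d y z) = d (d y x) z + d (d x y) z) ∧
  (∀ x y z, s (s x y) z - s x (s y z) = s (s y x) z - s y (s x z)) ∧
  (∀ x y z w, F1 d s (d x y + d y x) z w = d x (F1 d s y z w) + d y (F1 d s x z w)) ∧
  (∀ x y z w, d (F1 d s x y z + F1 d s x z y + F2 d s y z x) w =
      F2 d s y z (d x w) - d x (F2 d s y z w))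

/-- `G₁(x,y,z) = {x, y•z} - {x,y}•z - y•{x,z}`. -/
def G1 (bl lb : A → A → A) (x y z : A) : A :=
  lb x (bl y z) - bl (lb x y) z - bl y (lb x z)

/-- `G₂(x,y,z) = {y•z, x} - z•{y,x} - y•{z,x}`. -/
def G2 (bl lb : A → A → A) (x y z : A) : A :=
  lb (bl y z) x - bl z (lb y x) - bl y (lb z x)

/-- `(A, •, {-,-})` is a dual pre-F-manifold algebra: `•` permutative,
`{-,-}` Leibniz, plus three compatibility conditions. -/
def IsDualPreFManifold (bl lb : A → A → A) : Prop :=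
  (∀ x y z, bl x (bl y z) = bl (bl x y) z) ∧
  (∀ x y z, bl (bl x y) z = bl (bl y x) z) ∧
  (∀ x y z, lb x (lb y z) = lb (lb x y) z + lb y (lb x z)) ∧
  (∀ x y z w, G1 bl lb (bl x y) z w = bl x (G1 bl lb y z w) + bl y (G1 bl lb x z w)) ∧
  (∀ x y z w, G2 bl lb (bl y x) z w = bl y (G2 bl lb x z w) - bl (G1 bl lb y z w) x) ∧
  (∀ x y z, bl (lb x y) z + bl (lb y x) z = 0)

end FMan

namespace FMan

variable {R A : Type*} [CommSemiring R] [AddCommGroup A] [Module R A]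

/-- The coefficient of `ℏ ^ k` in the associator `(x ·ℏ y) ·ℏ z - x ·ℏ (y ·ℏ z)`. -/
def associatorCoeff (μ : ℕ → A →ₗ[R] A →ₗ[R] A) (k : ℕ) (x y z : A) : A :=
  ∑ i ∈ Finset.range (k + 1), (μ i (μ (k - i) x y) z - μ i x (μ (k - i) y z))

def commutator (m : A →ₗ[R] A →ₗ[R] A) : A →ₗ[R] A →ₗ[R] A := m - m.flip

@[simp]
lemma commutator_apply (m : A →ₗ[R] A →ₗ[R] A) (x y : A) :
    commutator m x y = m x y - m y x := rfl

lemma associatorCoeff_zero (μ : ℕ → A →ₗ[R] A →ₗ[R] A) (x y z : A) :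
    associatorCoeff μ 0 x y z = μ 0 (μ 0 x y) z - μ 0 x (μ 0 y z) := by
  simp [associatorCoeff]

lemma associatorCoeff_one (μ : ℕ → A →ₗ[R] A →ₗ[R] A) (x y z : A) :
    associatorCoeff μ 1 x y z =
      μ 0 (μ 1 x y) z - μ 0 x (μ 1 y z) + (μ 1 (μ 0 x y) z - μ 1 x (μ 0 y z)) := by
  simp [associatorCoeff, Finset.sum_range_succ]
  abel

lemma sum_jacobiator_eq_neg_alternating_associatorCoeff (μ : ℕ → A →ₗ[R] A →ₗ[R] A)
    (k : ℕ) (x y z : A) :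
    ∑ i ∈ Finset.range (k + 1),
      (commutator (μ i) x (commutator (μ (k - i)) y z) +
        commutator (μ i) y (commutator (μ (k - i)) z x) +
        commutator (μ i) z (commutator (μ (k - i)) x y)) =
      -((associatorCoeff μ k x y z - associatorCoeff μ k y x z) +
        (associatorCoeff μ k y z x - associatorCoeff μ k z y x) +
        (associatorCoeff μ k z x y - associatorCoeff μ k x z y)) := by
  simp only [associatorCoeff, ← Finset.sum_sub_distrib, ← Finset.sum_add_distrib,
    ← Finset.sum_neg_distrib]
  refine Finset.sum_congr rfl fun i _ => ?_
  simp only [commutator_apply, map_sub]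
  abel

lemma sum_jacobiator_eq_zero (μ : ℕ → A →ₗ[R] A →ₗ[R] A) (k : ℕ)
    (hk : ∀ x y z, associatorCoeff μ k x y z = associatorCoeff μ k y x z) (x y z : A) :
    ∑ i ∈ Finset.range (k + 1),
      (commutator (μ i) x (commutator (μ (k - i)) y z) +
        commutator (μ i) y (commutator (μ (k - i)) z x) +
        commutator (μ i) z (commutator (μ (k - i)) x y)) = 0 := by
  rw [sum_jacobiator_eq_neg_alternating_associatorCoeff, hk x y z, hk y z x, hk z x y]
  simp

lemma jacobi_commutator_one (μ : ℕ → A →ₗ[R] A →ₗ[R] A)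
    (hcomm : ∀ x y, μ 0 x y = μ 0 y x)
    (h2 : ∀ x y z, associatorCoeff μ 2 x y z = associatorCoeff μ 2 y x z) (x y z : A) :
    commutator (μ 1) x (commutator (μ 1) y z) + commutator (μ 1) y (commutator (μ 1) z x) +
      commutator (μ 1) z (commutator (μ 1) x y) = 0 := by
  have hzero : commutator (μ 0) = 0 := by
    ext a b
    simp [hcomm a b]
  simpa [Finset.sum_range_succ, hzero, -commutator_apply] using
    sum_jacobiator_eq_zero μ 2 h2 x y z

lemma assoc_of_comm_of_preLie (mul : A →ₗ[R] A →ₗ[R] A) (hcomm : ∀ x y, mul x y = mul y x)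
    (hpreLie : ∀ x y z, mul (mul x y) z - mul x (mul y z) = mul (mul y x) z - mul y (mul x z))
    (x y z : A) : mul (mul x y) z = mul x (mul y z) := by
  have hleft : ∀ a b c, mul a (mul b c) = mul b (mul a c) := fun a b c => by
    simpa [hcomm a b] using hpreLie a b c
  rw [hcomm (mul x y), hleft, hcomm z]

lemma left_comm_of_comm_of_assoc (mul : A →ₗ[R] A →ₗ[R] A)
    (hcomm : ∀ x y, mul x y = mul y x)
    (hassoc : ∀ x y z, mul (mul x y) z = mul x (mul y z)) (x y z : A) :
    mul x (mul y z) = mul y (mul x z) := by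
  rw [← hassoc, hcomm x y, hassoc]

lemma P_symm_of_firstOrder (mul : A →ₗ[R] A →ₗ[R] A) (star : A → A → A)
    (hcomm : ∀ x y, mul x y = mul y x)
    (hfirstOrder : ∀ x y z,
      mul (star x y) z - mul x (star y z) + (star (mul x y) z - star x (mul y z)) =
        mul (star y x) z - mul y (star x z) + (star (mul y x) z - star y (mul x z)))
    (x y z : A) : P (mul · ·) star x y z = P (mul · ·) star y x z := by
  have h := hfirstOrder x y z
  rw [hcomm y x] at h
  simp only [P]
  linear_combination (norm := abel) -h

lemma P_comm_right (mul : A →ₗ[R] A →ₗ[R] A) (br : A → A → A)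
    (hcomm : ∀ x y, mul x y = mul y x) (x y z : A) :
    P (mul · ·) br x y z = P (mul · ·) br x z y := by
  simp only [P, hcomm y z, hcomm (br x y) z, hcomm y (br x z)]
  abel

def hmDefect (mul : A →ₗ[R] A →ₗ[R] A) (br : A → A → A) (x y z w : A) : A :=
  P (mul · ·) br (mul x y) z w - mul x (P (mul · ·) br y z w) - mul y (P (mul · ·) br x z w)

/-- The second-order Leibniz defect of `br x`; it vanishes when `br x` is a derivation. -/
def P₂ (mul : A →ₗ[R] A →ₗ[R] A) (br : A → A → A) (x y z w : A) : A :=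
  P (mul · ·) br x (mul y z) w - mul y (P (mul · ·) br x z w) - mul z (P (mul · ·) br x y w)

lemma hmDefect_sub (mul : A →ₗ[R] A →ₗ[R] A) (f g : A → A → A) (x y z w : A) :
    hmDefect mul (fun a b => f a b - g a b) x y z w =
      hmDefect mul f x y z w - hmDefect mul g x y z w := by
  simp only [hmDefect, P, map_sub, LinearMap.sub_apply]
  abel

lemma hmDefect_flip (mul : A →ₗ[R] A →ₗ[R] A) (star : A → A → A)
    (hcomm : ∀ x y, mul x y = mul y x) (hassoc : ∀ x y z, mul (mul x y) z = mul x (mul y z))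
    (x y z w : A) :
    hmDefect mul (fun a b => star b a) x y z w = hmDefect mul star z w x y := by
  simp only [hmDefect, P, map_sub, hcomm, left_comm_of_comm_of_assoc mul hcomm hassoc]
  abel

lemma hmDefect_eq_P₂ (mul : A →ₗ[R] A →ₗ[R] A) (star : A → A → A)
    (hP : ∀ x y z, P (mul · ·) star x y z = P (mul · ·) star y x z) (x y z w : A) :
    hmDefect mul star x y z w = P₂ mul star z x y w := by
  rw [hmDefect, P₂, hP (mul x y), hP y, hP x]

lemma P₂_swap₁₂ (mul : A →ₗ[R] A →ₗ[R] A) (star : A → A → A)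
    (hcomm : ∀ x y, mul x y = mul y x) (x y z w : A) :
    P₂ mul star x y z w = P₂ mul star x z y w := by
  rw [P₂, P₂, hcomm y z]
  abel

lemma P₂_swap₂₃ (mul : A →ₗ[R] A →ₗ[R] A) (star : A → A → A)
    (hcomm : ∀ x y, mul x y = mul y x) (hassoc : ∀ x y z, mul (mul x y) z = mul x (mul y z))
    (x y z w : A) :
    P₂ mul star x y z w = P₂ mul star x y w z := by
  simp only [P₂, P, map_sub, hcomm, left_comm_of_comm_of_assoc mul hcomm hassoc]
  abel

lemma P₂_swap₀₃ (mul : A →ₗ[R] A →ₗ[R] A) (star : A → A → A)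
    (hcomm : ∀ x y, mul x y = mul y x)
    (hP : ∀ x y z, P (mul · ·) star x y z = P (mul · ·) star y x z) (x y z w : A) :
    P₂ mul star x y z w = P₂ mul star w y z x := by
  rw [← hmDefect_eq_P₂ mul star hP, ← hmDefect_eq_P₂ mul star hP, hmDefect, hmDefect,
    P_comm_right mul star hcomm (mul y z), P_comm_right mul star hcomm z,
    P_comm_right mul star hcomm y]

/-- `P₂` is totally symmetric, which makes `hmDefect` symmetric under `(x, y) ↔ (z, w)`. -/
lemma hmDefect_swap_pairs (mul : A →ₗ[R] A →ₗ[R] A) (star : A → A → A)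
    (hcomm : ∀ x y, mul x y = mul y x) (hassoc : ∀ x y z, mul (mul x y) z = mul x (mul y z))
    (hP : ∀ x y z, P (mul · ·) star x y z = P (mul · ·) star y x z) (x y z w : A) :
    hmDefect mul star x y z w = hmDefect mul star z w x y := by
  have h₁₂ := P₂_swap₁₂ mul star hcomm
  have h₂₃ := P₂_swap₂₃ mul star hcomm hassoc
  rw [hmDefect_eq_P₂ mul star hP, hmDefect_eq_P₂ mul star hP]
  calc P₂ mul star z x y w
      = P₂ mul star z w y x := by rw [h₁₂, h₂₃, h₁₂]
    _ = P₂ mul star x w y z := P₂_swap₀₃ mul star hcomm hP z w y x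
    _ = P₂ mul star x z w y := by rw [h₂₃, h₁₂]

theorem hertlingManin_of_P_symm (mul : A →ₗ[R] A →ₗ[R] A) (star : A → A → A)
    (hcomm : ∀ x y, mul x y = mul y x) (hassoc : ∀ x y z, mul (mul x y) z = mul x (mul y z))
    (hP : ∀ x y z, P (mul · ·) star x y z = P (mul · ·) star y x z) (x y z w : A) :
    P (mul · ·) (fun a b => star a b - star b a) (mul x y) z w =
      mul x (P (mul · ·) (fun a b => star a b - star b a) y z w) +
        mul y (P (mul · ·) (fun a b => star a b - star b a) x z w) := by
  have h : hmDefect mul (fun a b => star a b - star b a) x y z w = 0 := by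
    rw [hmDefect_sub, hmDefect_flip mul star hcomm hassoc,
      hmDefect_swap_pairs mul star hcomm hassoc hP, sub_self]
  rwa [hmDefect, sub_sub, sub_eq_zero] at h

end FMan

open FMan

theorem preLie_deformation_semiclassical_limit_general
    {K A : Type*} [Field K] [AddCommGroup A] [Module K A]
    (μ : ℕ → A →ₗ[K] A →ₗ[K] A)
    (hcomm : ∀ x y : A, μ 0 x y = μ 0 y x)
    (hpre : ∀ (k : ℕ) (x y z : A),
      ∑ i ∈ Finset.range (k + 1), (μ i (μ (k - i) x y) z - μ i x (μ (k - i) y z)) =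
      ∑ i ∈ Finset.range (k + 1), (μ i (μ (k - i) y x) z - μ i y (μ (k - i) x z))) :
    IsFManifold (fun x y => μ 0 x y) (fun x y => μ 1 x y - μ 1 y x) := by
  have hsymm : ∀ k x y z, associatorCoeff μ k x y z = associatorCoeff μ k y x z := hpre
  have hassoc := assoc_of_comm_of_preLie (μ 0) hcomm fun x y z => by
    simpa only [associatorCoeff_zero] using hsymm 0 x y z
  have hP := P_symm_of_firstOrder (μ 0) (μ 1 · ·) hcomm fun x y z => by
    simpa only [associatorCoeff_one] using hsymm 1 x y z
  refine ⟨hcomm, hassoc, fun x y => (neg_sub _ _).symm, fun x y z => ?_,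
    hertlingManin_of_P_symm (μ 0) (μ 1 · ·) hcomm hassoc hP⟩
  simpa only [commutator_apply] using jacobi_commutator_one μ hcomm (hsymm 2) x y z

/-- The semi-classical limit of a pre-Lie formal deformation of a commutative
associative algebra is an F-manifold algebra: if `μ : ℕ → bilinear maps` with
`μ 0` the given commutative associative product defines a pre-Lie product on
`A[[ℏ]]`, then `(A, μ 0, [x,y] = μ₁(x,y) - μ₁(y,x))` is an F-manifold algebra. -/
theorem preLie_deformation_semiclassical_limit
    {K A : Type*} [Field K] [CharZero K] [AddCommGroup A] [Module K A]
    (μ : ℕ → A →ₗ[K] A →ₗ[K] A)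
    (hcomm : ∀ x y : A, μ 0 x y = μ 0 y x)
    (hpre : ∀ (k : ℕ) (x y z : A),
      ∑ i ∈ Finset.range (k + 1), (μ i (μ (k - i) x y) z - μ i x (μ (k - i) y z)) =
      ∑ i ∈ Finset.range (k + 1), (μ i (μ (k - i) y x) z - μ i y (μ (k - i) x z))) :
    IsFManifold (fun x y => μ 0 x y) (fun x y => μ 1 x y - μ 1 y x) :=
  preLie_deformation_semiclassical_limit_general μ hcomm hpre
end

section
/- Let $T:V\to A$ be an O-operator on an F-manifold algebra $(A,\cdot_A,[-,-]_A)$ with respect to a representation $(V;\rho,\mu)$. Define $u\diamond v = \mu(T(u))v$ and $u\ast v = \rho(T(u))v$ on $V$. Then $(V,\diamond,\ast)$ is a pre-F-manifold algebra, and $T$ is a homomorphism from the sub-adjacent F-manifold algebra $V^c$ (with $u\cdot v = u\diamond v + v\diamond u$, $[u,v] = u\ast v - v\ast u$) to $(A,\cdot_A,[-,-]_A)$. -/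
/-! Each axiom of a pre-F-manifold algebra for `⋄` and `∗` is one of the defining identities of
the representation `(V; ρ, μ)` evaluated at images of `T`: the O-operator equations turn products
and brackets of images of `T` into images of `T`, under which `F₁(x, y, -)` becomes
`R(T x, T y)`, `F₂(x, y, -)` becomes `S(T x, T y)`, and `T` carries
`F₁(x, y, z) + F₁(x, z, y) + F₂(y, z, x)` to `P_{T x}(T y, T z)`. -/

namespace FMan

variable {K A V : Type*} [CommSemiring K] [AddCommGroup A] [Module K A]
  [AddCommGroup V] [Module K V]

/-- `u ⋄ v = μ(T u) v` for `f = μ`, and `u ∗ v = ρ(T u) v` for `f = ρ`. -/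
def inducedOp (f : A →ₗ[K] V →ₗ[K] V) (T : V →ₗ[K] A) (u v : V) : V :=
  f (T u) v

def repR (ρ μ : A →ₗ[K] V →ₗ[K] V) (br : A →ₗ[K] A →ₗ[K] A) (x y : A) (v : V) : V :=
  ρ x (μ y v) - μ y (ρ x v) - μ (br x y) v

def repS (ρ μ : A →ₗ[K] V →ₗ[K] V) (mul : A →ₗ[K] A →ₗ[K] A) (x y : A) (v : V) : V :=
  μ x (ρ y v) + μ y (ρ x v) - ρ (mul x y) v

variable {mA brA : A →ₗ[K] A →ₗ[K] A} {ρ μ : A →ₗ[K] V →ₗ[K] V} {T : V →ₗ[K] A}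

theorem zinbiel_inducedOp (hμ : ∀ (x y : A) (v : V), μ (mA x y) v = μ x (μ y v))
    (hT₁ : ∀ u v : V, mA (T u) (T v) = T (μ (T u) v + μ (T v) u)) (x y z : V) :
    inducedOp μ T x (inducedOp μ T y z) =
      inducedOp μ T (inducedOp μ T y x) z + inducedOp μ T (inducedOp μ T x y) z := by
  have h := hμ (T x) (T y) z
  rw [hT₁ x y, map_add, map_add, LinearMap.add_apply] at h
  simp only [inducedOp]
  rw [← h, add_comm]

theorem preLie_inducedOp (hρ : ∀ (x y : A) (v : V), ρ (brA x y) v = ρ x (ρ y v) - ρ y (ρ x v))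
    (hT₂ : ∀ u v : V, brA (T u) (T v) = T (ρ (T u) v - ρ (T v) u)) (x y z : V) :
    inducedOp ρ T (inducedOp ρ T x y) z - inducedOp ρ T x (inducedOp ρ T y z) =
      inducedOp ρ T (inducedOp ρ T y x) z - inducedOp ρ T y (inducedOp ρ T x z) := by
  have h := hρ (T x) (T y) z
  rw [hT₂ x y, map_sub, map_sub, LinearMap.sub_apply] at h
  simp only [inducedOp]
  exact sub_eq_sub_iff_sub_eq_sub.mpr h

theorem F1_inducedOp (hT₂ : ∀ u v : V, brA (T u) (T v) = T (ρ (T u) v - ρ (T v) u))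
    (x y z : V) : F1 (inducedOp μ T) (inducedOp ρ T) x y z = repR ρ μ brA (T x) (T y) z := by
  simp only [F1, inducedOp, repR, hT₂]

theorem F2_inducedOp (hT₁ : ∀ u v : V, mA (T u) (T v) = T (μ (T u) v + μ (T v) u))
    (x y z : V) : F2 (inducedOp μ T) (inducedOp ρ T) x y z = repS ρ μ mA (T x) (T y) z := by
  simp only [F2, inducedOp, repS, hT₁]

theorem map_F1_add_F1_add_F2_inducedOp
    (hT₁ : ∀ u v : V, mA (T u) (T v) = T (μ (T u) v + μ (T v) u))
    (hT₂ : ∀ u v : V, brA (T u) (T v) = T (ρ (T u) v - ρ (T v) u)) (x y z : V) :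
    T (F1 (inducedOp μ T) (inducedOp ρ T) x y z + F1 (inducedOp μ T) (inducedOp ρ T) x z y +
        F2 (inducedOp μ T) (inducedOp ρ T) y z x) =
      P (fun a b => mA a b) (fun a b => brA a b) (T x) (T y) (T z) := by
  simp only [P, hT₁, hT₂, ← map_sub]
  congr 1
  simp only [F1, F2, inducedOp, map_add, map_sub, LinearMap.add_apply, LinearMap.sub_apply]
  abel

theorem F1_compat_inducedOp
    (hR : ∀ (x y z : A) (v : V),
      repR ρ μ brA (mA x y) z v = μ x (repR ρ μ brA y z v) + μ y (repR ρ μ brA x z v))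
    (hT₁ : ∀ u v : V, mA (T u) (T v) = T (μ (T u) v + μ (T v) u))
    (hT₂ : ∀ u v : V, brA (T u) (T v) = T (ρ (T u) v - ρ (T v) u)) (x y z w : V) :
    F1 (inducedOp μ T) (inducedOp ρ T) (inducedOp μ T x y + inducedOp μ T y x) z w =
      inducedOp μ T x (F1 (inducedOp μ T) (inducedOp ρ T) y z w) +
        inducedOp μ T y (F1 (inducedOp μ T) (inducedOp ρ T) x z w) := by
  simp only [F1_inducedOp hT₂, inducedOp, ← hT₁]
  exact hR _ _ _ _

theorem F2_compat_inducedOp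
    (hS : ∀ (x y z : A) (v : V),
      μ (P (fun a b => mA a b) (fun a b => brA a b) x y z) v =
        repS ρ μ mA y z (μ x v) - μ x (repS ρ μ mA y z v))
    (hT₁ : ∀ u v : V, mA (T u) (T v) = T (μ (T u) v + μ (T v) u))
    (hT₂ : ∀ u v : V, brA (T u) (T v) = T (ρ (T u) v - ρ (T v) u)) (x y z w : V) :
    inducedOp μ T (F1 (inducedOp μ T) (inducedOp ρ T) x y z +
        F1 (inducedOp μ T) (inducedOp ρ T) x z y + F2 (inducedOp μ T) (inducedOp ρ T) y z x) w =
      F2 (inducedOp μ T) (inducedOp ρ T) y z (inducedOp μ T x w) -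
        inducedOp μ T x (F2 (inducedOp μ T) (inducedOp ρ T) y z w) := by
  rw [inducedOp, map_F1_add_F1_add_F2_inducedOp hT₁ hT₂, F2_inducedOp hT₁, F2_inducedOp hT₁]
  exact hS _ _ _ _

theorem isPreFManifold_inducedOp
    (hρ : ∀ (x y : A) (v : V), ρ (brA x y) v = ρ x (ρ y v) - ρ y (ρ x v))
    (hμ : ∀ (x y : A) (v : V), μ (mA x y) v = μ x (μ y v))
    (hR : ∀ (x y z : A) (v : V),
      repR ρ μ brA (mA x y) z v = μ x (repR ρ μ brA y z v) + μ y (repR ρ μ brA x z v))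
    (hS : ∀ (x y z : A) (v : V),
      μ (P (fun a b => mA a b) (fun a b => brA a b) x y z) v =
        repS ρ μ mA y z (μ x v) - μ x (repS ρ μ mA y z v))
    (hT₁ : ∀ u v : V, mA (T u) (T v) = T (μ (T u) v + μ (T v) u))
    (hT₂ : ∀ u v : V, brA (T u) (T v) = T (ρ (T u) v - ρ (T v) u)) :
    IsPreFManifold (inducedOp μ T) (inducedOp ρ T) :=
  ⟨zinbiel_inducedOp hμ hT₁, preLie_inducedOp hρ hT₂, F1_compat_inducedOp hR hT₁ hT₂,
    F2_compat_inducedOp hS hT₁ hT₂⟩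

end FMan

open FMan

theorem Ooperator_gives_preFManifold_general
    {K A V : Type*} [Field K]
    [AddCommGroup A] [Module K A] [AddCommGroup V] [Module K V]
    (mA brA : A →ₗ[K] A →ₗ[K] A) (ρ μ : A →ₗ[K] V →ₗ[K] V)
    (hρ : ∀ (x y : A) (v : V), ρ (brA x y) v = ρ x (ρ y v) - ρ y (ρ x v))
    (hμ : ∀ (x y : A) (v : V), μ (mA x y) v = μ x (μ y v))
    (hR : ∀ (x y z : A) (v : V),
      (let R : A → A → V → V := fun a b u => ρ a (μ b u) - μ b (ρ a u) - μ (brA a b) u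
       R (mA x y) z v) =
      (let R : A → A → V → V := fun a b u => ρ a (μ b u) - μ b (ρ a u) - μ (brA a b) u
       μ x (R y z v) + μ y (R x z v)))
    (hS : ∀ (x y z : A) (v : V),
      μ (P (fun a b => mA a b) (fun a b => brA a b) x y z) v =
      (let S : A → A → V → V := fun a b u => μ a (ρ b u) + μ b (ρ a u) - ρ (mA a b) u
       S y z (μ x v) - μ x (S y z v)))
    (T : V →ₗ[K] A)
    (hT₁ : ∀ u v : V, mA (T u) (T v) = T (μ (T u) v + μ (T v) u))
    (hT₂ : ∀ u v : V, brA (T u) (T v) = T (ρ (T u) v - ρ (T v) u)) :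
    IsPreFManifold (A := V) (fun u v => μ (T u) v) (fun u v => ρ (T u) v) ∧
    (∀ u v : V, T (μ (T u) v + μ (T v) u) = mA (T u) (T v)) ∧
    (∀ u v : V, T (ρ (T u) v - ρ (T v) u) = brA (T u) (T v)) :=
  ⟨isPreFManifold_inducedOp hρ hμ hR hS hT₁ hT₂, fun u v => (hT₁ u v).symm,
    fun u v => (hT₂ u v).symm⟩

/-- An O-operator `T : V → A` on an F-manifold algebra with respect to a
representation `(V; ρ, μ)` induces a pre-F-manifold algebra structure on `V`,
and `T` is a homomorphism from the sub-adjacent F-manifold algebra to `A`. -/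
theorem Ooperator_gives_preFManifold
    {K A V : Type*} [Field K] [CharZero K]
    [AddCommGroup A] [Module K A] [AddCommGroup V] [Module K V]
    (mA brA : A →ₗ[K] A →ₗ[K] A) (ρ μ : A →ₗ[K] V →ₗ[K] V)
    (hA : IsFManifold (fun x y => mA x y) (fun x y => brA x y))
    (hρ : ∀ (x y : A) (v : V), ρ (brA x y) v = ρ x (ρ y v) - ρ y (ρ x v))
    (hμ : ∀ (x y : A) (v : V), μ (mA x y) v = μ x (μ y v))
    (hR : ∀ (x y z : A) (v : V),
      (let R : A → A → V → V := fun a b u => ρ a (μ b u) - μ b (ρ a u) - μ (brA a b) u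
       R (mA x y) z v) =
      (let R : A → A → V → V := fun a b u => ρ a (μ b u) - μ b (ρ a u) - μ (brA a b) u
       μ x (R y z v) + μ y (R x z v)))
    (hS : ∀ (x y z : A) (v : V),
      μ (P (fun a b => mA a b) (fun a b => brA a b) x y z) v =
      (let S : A → A → V → V := fun a b u => μ a (ρ b u) + μ b (ρ a u) - ρ (mA a b) u
       S y z (μ x v) - μ x (S y z v)))
    (T : V →ₗ[K] A)
    (hT₁ : ∀ u v : V, mA (T u) (T v) = T (μ (T u) v + μ (T v) u))
    (hT₂ : ∀ u v : V, brA (T u) (T v) = T (ρ (T u) v - ρ (T v) u)) :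
    IsPreFManifold (A := V) (fun u v => μ (T u) v) (fun u v => ρ (T u) v) ∧
    (∀ u v : V, T (μ (T u) v + μ (T v) u) = mA (T u) (T v)) ∧
    (∀ u v : V, T (ρ (T u) v - ρ (T v) u) = brA (T u) (T v)) :=
  Ooperator_gives_preFManifold_general mA brA ρ μ hρ hμ hR hS T hT₁ hT₂
end
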